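/- With the notation above, the depth of the cycle Vᵢ equals Γᵢ; that is, min_{∂Vᵢ} H − min_{Vᵢ} H = Γᵢ. -/

import Mathlib

/-!
Write `c = Φ(Pᵢ, ⋃_{j ≠ i} Pⱼ) = H(Pᵢ) + Γᵢ`, so that `Vᵢ = {η | Φ(Pᵢ, η) < c}`. Crossing an edge
raises `Φ(Pᵢ, ·)` at most to the energy of the new vertex, so every point of `∂Vᵢ` has energy at
least `c`, while an optimal path from `Pᵢ` to another plateau leaves `Vᵢ` at energy at most `c`;
hence `min_{∂Vᵢ} H = c`. From every `η` one descends, never rising above `H η`, into some stable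
plateau: the lowest point reachable in this way is the bottom of one. For `η ∈ Vᵢ` that plateau
cannot be another `Pⱼ`, which would force `Φ(Pᵢ, Pⱼ) < c`; so it is `Pᵢ`, and `min_{Vᵢ} H = H(Pᵢ)`.
-/

open SimpleGraph

variable {Ω : Type*}

/-- The height of a walk: the maximum of the energy `H` along its support. -/
noncomputable def walkHeight (H : Ω → ℝ) {G : SimpleGraph Ω} {a b : Ω} (w : G.Walk a b) : ℝ :=
  (w.support.map H).foldr max (H b)

/-- The communication height between two vertices: minimal height over all paths. -/
noncomputable def commHeight (G : SimpleGraph Ω) (H : Ω → ℝ) (a b : Ω) : ℝ :=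
  sInf {h : ℝ | ∃ w : G.Walk a b, walkHeight H w = h}

/-- Outer boundary of a set of vertices. -/
def outerBoundary (G : SimpleGraph Ω) (A : Set Ω) : Set Ω :=
  {ξ | ξ ∉ A ∧ ∃ η ∈ A, G.Adj ξ η}

/-- A (nontrivial) cycle: nonempty, connected, proper, with `max_C H < min_{∂C} H`. -/
def IsCycleSet (G : SimpleGraph Ω) (H : Ω → ℝ) (C : Set Ω) : Prop :=
  C.Nonempty ∧ (G.induce C).Connected ∧ C ≠ Set.univ ∧
    ∀ η ∈ C, ∀ ξ ∈ outerBoundary G C, H η < H ξ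

/-- A stable plateau: nonempty, connected, constant energy, strictly higher on the boundary. -/
def IsStablePlateau (G : SimpleGraph Ω) (H : Ω → ℝ) (P : Set Ω) : Prop :=
  P.Nonempty ∧ (G.induce P).Connected ∧ (∀ x ∈ P, ∀ y ∈ P, H x = H y) ∧
    ∀ x ∈ P, ∀ ζ ∈ outerBoundary G P, H x < H ζ

/-- Communication height between two sets. -/
noncomputable def commHeightSet (G : SimpleGraph Ω) (H : Ω → ℝ) (A B : Set Ω) : ℝ :=
  sInf {h : ℝ | ∃ a ∈ A, ∃ b ∈ B, commHeight G H a b = h}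

/-- The bottom of a set: the minimizers of `H` on it. -/
def bottom (H : Ω → ℝ) (C : Set Ω) : Set Ω := {x ∈ C | ∀ y ∈ C, H x ≤ H y}

/-- `A` is a connected component of `S`: a maximal nonempty connected subset of `S`. -/
def IsConnectedComponentOf (G : SimpleGraph Ω) (S A : Set Ω) : Prop :=
  A ⊆ S ∧ A.Nonempty ∧ (G.induce A).Connected ∧
    ∀ B : Set Ω, A ⊆ B → B ⊆ S → (G.induce B).Connected → B = A

namespace SimpleGraph.Walk

variable {G : SimpleGraph Ω} {H : Ω → ℝ} {a b c : Ω}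

@[simp]
lemma walkHeight_nil : walkHeight H (nil : G.Walk a a) = H a := by
  simp [walkHeight]

@[simp]
lemma walkHeight_cons (h : G.Adj a b) (w : G.Walk b c) :
    walkHeight H (cons h w) = max (H a) (walkHeight H w) := by
  simp [walkHeight]

lemma walkHeight_le_iff {w : G.Walk a b} {r : ℝ} :
    walkHeight H w ≤ r ↔ ∀ x ∈ w.support, H x ≤ r := by
  induction w with
  | nil => simp
  | cons h w ih => simp [ih]

lemma le_walkHeight_of_mem_support {w : G.Walk a b} {x : Ω} (hx : x ∈ w.support) :
    H x ≤ walkHeight H w :=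
  walkHeight_le_iff.mp le_rfl x hx

lemma walkHeight_mem_range (w : G.Walk a b) : walkHeight H w ∈ Set.range H := by
  induction w with
  | nil => simp
  | @cons u _ _ _ w ih =>
    rw [walkHeight_cons]
    rcases max_choice (H u) (walkHeight H w) with h | h <;> rw [h]
    exacts [⟨u, rfl⟩, ih]

lemma walkHeight_append (w₁ : G.Walk a b) (w₂ : G.Walk b c) :
    walkHeight H (w₁.append w₂) = max (walkHeight H w₁) (walkHeight H w₂) := by
  induction w₁ with
  | nil =>
    rw [nil_append, walkHeight_nil,
      max_eq_right (le_walkHeight_of_mem_support w₂.start_mem_support)]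
  | cons h w ih => simp [ih, max_assoc]

lemma walkHeight_concat (w : G.Walk a b) (h : G.Adj b c) :
    walkHeight H (w.concat h) = max (walkHeight H w) (H c) := by
  rw [concat_eq_append, walkHeight_append, walkHeight_cons, walkHeight_nil, ← max_assoc,
    max_eq_left (le_walkHeight_of_mem_support w.end_mem_support)]

lemma exists_mem_support_mem_outerBoundary (w : G.Walk a b) {A : Set Ω} (ha : a ∈ A)
    (hb : b ∉ A) : ∃ x ∈ w.support, x ∈ outerBoundary G A := by
  obtain ⟨d, hd, hdA, hdA'⟩ := w.exists_boundary_dart A ha hb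
  exact ⟨d.snd, w.dart_snd_mem_support_of_mem_darts hd, hdA', d.fst, hdA, d.adj.symm⟩

end SimpleGraph.Walk

open SimpleGraph.Walk

section CommHeight

variable {G : SimpleGraph Ω} {H : Ω → ℝ} {a b c : Ω}

lemma commHeight_le_walkHeight (w : G.Walk a b) : commHeight G H a b ≤ walkHeight H w :=
  csInf_le ⟨H a, fun _ ⟨w, hw⟩ => hw ▸ le_walkHeight_of_mem_support w.start_mem_support⟩ ⟨w, rfl⟩

lemma commHeight_le_walkHeight_of_mem_support (w : G.Walk a b) {x : Ω} (hx : x ∈ w.support) :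
    commHeight G H a x ≤ walkHeight H w := by
  classical
  refine (commHeight_le_walkHeight (w.takeUntil x hx)).trans (walkHeight_le_iff.mpr ?_)
  exact fun y hy => le_walkHeight_of_mem_support (w.support_takeUntil_subset_support hx hy)

lemma exists_walkHeight_eq_commHeight [Finite Ω] (hab : G.Reachable a b) :
    ∃ w : G.Walk a b, walkHeight H w = commHeight G H a b := by
  obtain ⟨w⟩ := hab
  have hfin : {h : ℝ | ∃ w : G.Walk a b, walkHeight H w = h}.Finite :=
    (Set.finite_range H).subset (by rintro _ ⟨w, rfl⟩; exact walkHeight_mem_range w)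
  exact Set.Nonempty.csInf_mem (s := {h : ℝ | ∃ w : G.Walk a b, walkHeight H w = h})
    ⟨_, w, rfl⟩ hfin

lemma le_commHeight_left [Finite Ω] (hab : G.Reachable a b) : H a ≤ commHeight G H a b := by
  obtain ⟨w, hw⟩ := exists_walkHeight_eq_commHeight (H := H) hab
  exact hw ▸ le_walkHeight_of_mem_support w.start_mem_support

lemma le_commHeight_right [Finite Ω] (hab : G.Reachable a b) : H b ≤ commHeight G H a b := by
  obtain ⟨w, hw⟩ := exists_walkHeight_eq_commHeight (H := H) hab
  exact hw ▸ le_walkHeight_of_mem_support w.end_mem_support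

lemma commHeight_self [Finite Ω] : commHeight G H a a = H a :=
  le_antisymm ((commHeight_le_walkHeight nil).trans_eq walkHeight_nil)
    (le_commHeight_left (Reachable.refl a))

lemma commHeight_le_max [Finite Ω] (hab : G.Reachable a b) (hbc : G.Reachable b c) :
    commHeight G H a c ≤ max (commHeight G H a b) (commHeight G H b c) := by
  obtain ⟨w₁, hw₁⟩ := exists_walkHeight_eq_commHeight (H := H) hab
  obtain ⟨w₂, hw₂⟩ := exists_walkHeight_eq_commHeight (H := H) hbc
  rw [← hw₁, ← hw₂, ← walkHeight_append]
  exact commHeight_le_walkHeight _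

lemma commHeight_le_max_of_adj [Finite Ω] (hab : G.Reachable a b) (hbc : G.Adj b c) :
    commHeight G H a c ≤ max (commHeight G H a b) (H c) := by
  obtain ⟨w, hw⟩ := exists_walkHeight_eq_commHeight (H := H) hab
  rw [← hw, ← walkHeight_concat w hbc]
  exact commHeight_le_walkHeight _

lemma exists_mem_outerBoundary_le_commHeight [Finite Ω] {A : Set Ω} (hab : G.Reachable a b)
    (ha : a ∈ A) (hb : b ∉ A) : ∃ ξ ∈ outerBoundary G A, H ξ ≤ commHeight G H a b := by
  obtain ⟨w, hw⟩ := exists_walkHeight_eq_commHeight (H := H) hab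
  obtain ⟨ξ, hξw, hξ⟩ := w.exists_mem_support_mem_outerBoundary ha hb
  exact ⟨ξ, hξ, hw ▸ le_walkHeight_of_mem_support hξw⟩

end CommHeight

section CommHeightSet

variable [Finite Ω] {G : SimpleGraph Ω} {H : Ω → ℝ} {A B : Set Ω} {a b : Ω}

lemma finite_commHeight_image (A B : Set Ω) :
    {h : ℝ | ∃ a ∈ A, ∃ b ∈ B, commHeight G H a b = h}.Finite :=
  (Set.finite_range fun q : Ω × Ω => commHeight G H q.1 q.2).subset
    (by rintro _ ⟨a, -, b, -, rfl⟩; exact ⟨(a, b), rfl⟩)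

lemma commHeightSet_le (ha : a ∈ A) (hb : b ∈ B) : commHeightSet G H A B ≤ commHeight G H a b :=
  csInf_le (finite_commHeight_image A B).bddBelow ⟨a, ha, b, hb, rfl⟩

lemma exists_commHeight_eq_commHeightSet (hA : A.Nonempty) (hB : B.Nonempty) :
    ∃ a ∈ A, ∃ b ∈ B, commHeight G H a b = commHeightSet G H A B := by
  obtain ⟨a, ha⟩ := hA
  obtain ⟨b, hb⟩ := hB
  exact Set.Nonempty.csInf_mem (s := {h : ℝ | ∃ a ∈ A, ∃ b ∈ B, commHeight G H a b = h})
    ⟨_, a, ha, b, hb, rfl⟩ (finite_commHeight_image A B)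

lemma exists_commHeight_eq_commHeightSet_singleton (hA : A.Nonempty) (b : Ω) :
    ∃ a ∈ A, commHeight G H a b = commHeightSet G H A {b} := by
  obtain ⟨a, ha, _, rfl, hab⟩ :=
    exists_commHeight_eq_commHeightSet (G := G) (H := H) hA (Set.singleton_nonempty b)
  exact ⟨a, ha, hab⟩

lemma commHeightSet_singleton_le (ha : a ∈ A) : commHeightSet G H A {a} ≤ H a :=
  (commHeightSet_le ha (Set.mem_singleton a)).trans_eq commHeight_self

lemma le_commHeightSet_singleton (hG : G.Connected) (hA : A.Nonempty) (b : Ω) :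
    H b ≤ commHeightSet G H A {b} := by
  obtain ⟨a, -, hab⟩ := exists_commHeight_eq_commHeightSet_singleton (G := G) (H := H) hA b
  exact hab ▸ le_commHeight_right (hG.preconnected a b)

lemma commHeightSet_le_singleton (hA : A.Nonempty) (hb : b ∈ B) :
    commHeightSet G H A B ≤ commHeightSet G H A {b} := by
  obtain ⟨a, ha, hab⟩ := exists_commHeight_eq_commHeightSet_singleton (G := G) (H := H) hA b
  exact hab ▸ commHeightSet_le ha hb

lemma commHeightSet_singleton_le_max_of_adj (hG : G.Connected) (hA : A.Nonempty)
    (hab : G.Adj a b) : commHeightSet G H A {b} ≤ max (commHeightSet G H A {a}) (H b) := by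
  obtain ⟨x, hx, hxa⟩ := exists_commHeight_eq_commHeightSet_singleton (G := G) (H := H) hA a
  exact hxa ▸ (commHeightSet_le hx (Set.mem_singleton b)).trans
    (commHeight_le_max_of_adj (hG.preconnected x a) hab)

end CommHeightSet

section StablePlateau

variable {G : SimpleGraph Ω} {H : Ω → ℝ} {A B Q : Set Ω}

lemma IsStablePlateau.subset_of_mem (hQ : IsStablePlateau G H Q) (hA : IsStablePlateau G H A)
    {x : Ω} (hxQ : x ∈ Q) (hxA : x ∈ A) : Q ⊆ A := by
  intro y hyQ
  by_contra hyA
  obtain ⟨w⟩ := hQ.2.1.preconnected ⟨x, hxQ⟩ ⟨y, hyQ⟩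
  obtain ⟨d, -, hdA, hdA'⟩ := w.exists_boundary_dart {z : Q | z.1 ∈ A} hxA hyA
  exact (hA.2.2.2 _ hdA _ ⟨hdA', _, hdA, d.adj.symm⟩).ne (hQ.2.2.1 _ d.fst.2 _ d.snd.2)

lemma IsStablePlateau.eq_of_mem (hQ : IsStablePlateau G H Q) (hA : IsStablePlateau G H A)
    {x : Ω} (hxQ : x ∈ Q) (hxA : x ∈ A) : Q = A :=
  (hQ.subset_of_mem hA hxQ hxA).antisymm (hA.subset_of_mem hQ hxA hxQ)

lemma IsStablePlateau.lt_commHeightSet [Finite Ω] (hG : G.Connected) (hA : IsStablePlateau G H A)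
    (hB : B.Nonempty) (hAB : Disjoint A B) {a : Ω} (ha : a ∈ A) :
    H a < commHeightSet G H A B := by
  obtain ⟨a', ha', b, hb, hab⟩ := exists_commHeight_eq_commHeightSet (G := G) (H := H) hA.1 hB
  obtain ⟨ξ, hξ, hξab⟩ := exists_mem_outerBoundary_le_commHeight (H := H)
    (hG.preconnected a' b) ha' (hAB.notMem_of_mem_right hb)
  exact (hA.2.2.2 a ha ξ hξ).trans_le (hξab.trans_eq hab)

lemma isStablePlateau_setOf_commHeight_le [Finite Ω] (hG : G.Connected) {x₀ : Ω}
    (hmin : ∀ x, commHeight G H x₀ x ≤ H x₀ → H x₀ ≤ H x) :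
    IsStablePlateau G H {x | commHeight G H x₀ x ≤ H x₀} := by
  set S := {x | commHeight G H x₀ x ≤ H x₀}
  have hx₀ : x₀ ∈ S := commHeight_self.le
  have hconst : ∀ x ∈ S, H x = H x₀ := fun x hx =>
    ((le_commHeight_right (hG.preconnected x₀ x)).trans hx).antisymm (hmin x hx)
  refine ⟨⟨x₀, hx₀⟩, ?_, fun x hx y hy => (hconst x hx).trans (hconst y hy).symm, ?_⟩
  · refine induce_connected_of_patches x₀ hx₀ fun {x} hx => ?_
    obtain ⟨w, hw⟩ := exists_walkHeight_eq_commHeight (H := H) (hG.preconnected x₀ x)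
    refine ⟨{z | z ∈ w.support}, fun z hz => ?_, w.start_mem_support, w.end_mem_support,
      w.connected_induce_support.preconnected _ _⟩
    exact (commHeight_le_walkHeight_of_mem_support w hz).trans (hw ▸ hx)
  · rintro x hx ζ ⟨hζ, y, hy, hζy⟩
    rw [hconst x hx]
    by_contra! hle
    exact hζ ((commHeight_le_max_of_adj (hG.preconnected x₀ y) hζy.symm).trans (max_le hy hle))

lemma exists_isStablePlateau_commHeight_le [Finite Ω] (hG : G.Connected) (η : Ω) :
    ∃ Q, IsStablePlateau G H Q ∧ ∃ q ∈ Q, commHeight G H η q ≤ H η := by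
  obtain ⟨x₀, hx₀, hmin⟩ := Set.exists_min_image {x | commHeight G H η x ≤ H η} H
    (Set.toFinite _) ⟨η, commHeight_self.le⟩
  have hx₀η : H x₀ ≤ H η := (le_commHeight_right (hG.preconnected η x₀)).trans hx₀
  refine ⟨_, isStablePlateau_setOf_commHeight_le hG fun x hx => hmin x ?_,
    x₀, commHeight_self.le, hx₀⟩
  exact (commHeight_le_max (hG.preconnected η x₀) (hG.preconnected x₀ x)).trans
    (max_le hx₀ (hx.trans hx₀η))

end StablePlateau

def valley (G : SimpleGraph Ω) (H : Ω → ℝ) (A : Set Ω) (c : ℝ) : Set Ω :=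
  {η | commHeightSet G H A {η} < c}

section Valley

variable [Finite Ω] {G : SimpleGraph Ω} {H : Ω → ℝ} {A B : Set Ω}

lemma isLeast_image_valley (hG : G.Connected) (hA : IsStablePlateau G H A)
    (hcover : ∀ Q, IsStablePlateau G H Q → Q ⊆ A ∪ B) {p : Ω} (hp : p ∈ A)
    (hpB : H p < commHeightSet G H A B) :
    IsLeast (H '' valley G H A (commHeightSet G H A B)) (H p) := by
  refine ⟨⟨p, (commHeightSet_singleton_le hp).trans_lt hpB, rfl⟩, ?_⟩
  rintro _ ⟨η, hη, rfl⟩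
  obtain ⟨Q, hQ, q, hqQ, hηq⟩ := exists_isStablePlateau_commHeight_le (H := H) hG η
  rcases hcover Q hQ hqQ with hqA | hqB
  · calc H p = H q := hA.2.2.1 p hp q hqA
      _ ≤ commHeight G H η q := le_commHeight_right (hG.preconnected η q)
      _ ≤ H η := hηq
  · obtain ⟨a, ha, haη⟩ := exists_commHeight_eq_commHeightSet_singleton (G := G) (H := H) hA.1 η
    have hηc : H η < commHeightSet G H A B := (le_commHeightSet_singleton hG hA.1 η).trans_lt hη
    have : commHeightSet G H A B < commHeightSet G H A B :=
      calc commHeightSet G H A B ≤ commHeight G H a q := commHeightSet_le ha hqB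
        _ ≤ max (commHeight G H a η) (commHeight G H η q) :=
          commHeight_le_max (hG.preconnected a η) (hG.preconnected η q)
        _ < commHeightSet G H A B := by rw [haη]; exact max_lt hη (hηq.trans_lt hηc)
    exact absurd this (lt_irrefl _)

lemma isLeast_image_outerBoundary_valley (hG : G.Connected) (hA : A.Nonempty) (hB : B.Nonempty)
    (hAB : ∀ a ∈ A, H a < commHeightSet G H A B) :
    IsLeast (H '' outerBoundary G (valley G H A (commHeightSet G H A B)))
      (commHeightSet G H A B) := by
  set c := commHeightSet G H A B
  have hlower : ∀ ξ ∈ outerBoundary G (valley G H A c), c ≤ H ξ := by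
    rintro ξ ⟨hξ, η, hη, hξη⟩
    by_contra! hξc
    exact hξ ((commHeightSet_singleton_le_max_of_adj hG hA hξη.symm).trans_lt (max_lt hη hξc))
  obtain ⟨a, ha, b, hb, hab⟩ := exists_commHeight_eq_commHeightSet (G := G) (H := H) hA hB
  have haV : a ∈ valley G H A c := (commHeightSet_singleton_le ha).trans_lt (hAB a ha)
  have hbV : b ∉ valley G H A c := (commHeightSet_le_singleton hA hb).not_gt
  obtain ⟨ξ, hξ, hξc⟩ := exists_mem_outerBoundary_le_commHeight (H := H)
    (hG.preconnected a b) haV hbV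
  refine ⟨⟨ξ, hξ, (hξc.trans_eq hab).antisymm (hlower ξ hξ)⟩, ?_⟩
  rintro _ ⟨ξ, hξ, rfl⟩
  exact hlower ξ hξ

end Valley

/-- the depth of the valley `Vᵢ` equals the initial depth `Γᵢ`. -/
theorem depth_of_valley [Fintype Ω] (G : SimpleGraph Ω) (hG : G.Connected) (H : Ω → ℝ)
    (ν : ℕ) (hν : 2 ≤ ν) (P : Fin ν → Set Ω)
    (hP : ∀ i, IsStablePlateau G H (P i))
    (hPinj : Function.Injective P)
    (hPall : ∀ Q : Set Ω, IsStablePlateau G H Q → ∃ i, Q = P i)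
    (p : Fin ν → Ω) (hp : ∀ i, p i ∈ P i)
    (Γ : Fin ν → ℝ)
    (hΓ : ∀ i, Γ i = commHeightSet G H (P i) {x | ∃ j, j ≠ i ∧ x ∈ P j} - H (p i))
    (V : Fin ν → Set Ω)
    (hV : ∀ i, V i = {η | commHeightSet G H (P i) {η} - H (p i) < Γ i}) :
    ∀ i, sInf (H '' outerBoundary G (V i)) - sInf (H '' V i) = Γ i := by
  intro i
  set O := {x | ∃ j, j ≠ i ∧ x ∈ P j}
  have hO : O.Nonempty := by
    have : Nontrivial (Fin ν) := Fin.nontrivial_iff_two_le.mpr hν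
    obtain ⟨j, hj⟩ := exists_ne i
    obtain ⟨x, hx⟩ := (hP j).1
    exact ⟨x, j, hj, hx⟩
  have hdisj : Disjoint (P i) O := Set.disjoint_left.mpr fun x hxi ⟨j, hj, hxj⟩ =>
    hj (hPinj ((hP j).eq_of_mem (hP i) hxj hxi))
  have hcover : ∀ Q, IsStablePlateau G H Q → Q ⊆ P i ∪ O := by
    rintro Q hQ x hx
    obtain ⟨j, rfl⟩ := hPall Q hQ
    by_cases hj : j = i
    · exact Or.inl (hj ▸ hx)
    · exact Or.inr ⟨j, hj, hx⟩
  have hlt : ∀ a ∈ P i, H a < commHeightSet G H (P i) O :=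
    fun a ha => (hP i).lt_commHeightSet hG hO hdisj ha
  have hVi : V i = valley G H (P i) (commHeightSet G H (P i) O) := by
    ext η
    rw [hV i, hΓ i]
    exact sub_lt_sub_iff_right (H (p i))
  rw [hVi, (isLeast_image_outerBoundary_valley hG (hP i).1 hO hlt).csInf_eq,
    (isLeast_image_valley hG (hP i) hcover (hp i) (hlt _ (hp i))).csInf_eq, hΓ i]
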